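/- arXiv:2507.21445 — 3 statements merged into one kernel-verified Lean document; each statement's English description precedes it below -/
import Mathlib

section
/- Let φ be a CNF formula over variables x_1, …, x_n. Then φ is satisfiable if and only if (G(φ), T(φ)) is a yes-instance of Steiner Orientation. Note that G(φ) has exactly n undirected edges. -/
/-- A mixed graph `G = (V, E, A)`: a simple graph `E` of undirected edges together
with a set `A` of arcs (ordered pairs of distinct vertices). -/
structure MixedGraph (V : Type*) where
  E : SimpleGraph V
  A : V → V → Prop
  A_irrefl : ∀ v : V, ¬ A v v

namespace MixedGraph

variable {V : Type*}

/-- The underlying simple graph of a mixed graph. -/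
def underlying (G : MixedGraph V) : SimpleGraph V where
  Adj u v := G.E.Adj u v ∨ G.A u v ∨ G.A v u
  symm := by
    constructor
    intro u v h
    rcases h with h | h | h
    · exact Or.inl h.symm
    · exact Or.inr (Or.inr h)
    · exact Or.inr (Or.inl h)
  loopless := by
    constructor
    intro v h
    rcases h with h | h | h
    · exact G.E.irrefl h
    · exact G.A_irrefl v h
    · exact G.A_irrefl v h

/-- `G` contains a mixed cycle: a cyclic sequence of `p ≥ 2` pairwise distinct
vertices in which each consecutive pair (cyclically) is an undirected edge of `E`
or an arc of `A`, and no edge of `E` is used by two different consecutive pairs.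
(`useE i = true` means the `i`-th consecutive pair uses an edge of `E`.) -/
def HasMixedCycle (G : MixedGraph V) : Prop :=
  ∃ (p : ℕ) (c : Fin (p + 2) → V) (useE : Fin (p + 2) → Bool),
    Function.Injective c ∧
    (∀ i : Fin (p + 2),
      (useE i = true → G.E.Adj (c i) (c (i + 1))) ∧
      (useE i = false → G.A (c i) (c (i + 1)))) ∧
    (∀ i j : Fin (p + 2), i ≠ j → useE i = true → useE j = true →
      s(c i, c (i + 1)) ≠ s(c j, c (j + 1)))

/-- A mixed graph is mixed acyclic if it has no mixed cycle. -/
def MixedAcyclic (G : MixedGraph V) : Prop := ¬ G.HasMixedCycle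

/-- An orientation of the undirected edges of a mixed graph: each edge
`{u,v} ∈ E` is assigned exactly one of the two directions `(u,v)`, `(v,u)`. -/
structure Orientation (G : MixedGraph V) where
  dir : V → V → Prop
  dir_adj : ∀ u v : V, dir u v → G.E.Adj u v
  total : ∀ u v : V, G.E.Adj u v → dir u v ∨ dir v u
  antisymm : ∀ u v : V, dir u v → ¬ dir v u

/-- The arc relation of the digraph `G_λ`: the original arcs together with the
chosen orientations of the undirected edges. -/
def Orientation.arc {G : MixedGraph V} (lam : Orientation G) (u v : V) : Prop :=
  G.A u v ∨ lam.dir u v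

/-- The orientation `lam` satisfies the set `T` of terminal pairs if `G_λ`
contains a directed path from `s` to `t` for every `(s, t) ∈ T`. -/
def Orientation.Satisfies {G : MixedGraph V} (lam : Orientation G)
    (T : Set (V × V)) : Prop :=
  ∀ p ∈ T, Relation.ReflTransGen lam.arc p.1 p.2

/-- `(G, T)` is a yes-instance of Steiner Orientation: some orientation of the
undirected edges satisfies all terminal pairs. -/
def YesInstance (G : MixedGraph V) (T : Set (V × V)) : Prop :=
  ∃ lam : Orientation G, lam.Satisfies T

/-- The number of arcs of `G` having `v` as head or as tail. -/
noncomputable def degA (G : MixedGraph V) (v : V) : ℕ :=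
  {p : V × V | G.A p.1 p.2 ∧ (p.1 = v ∨ p.2 = v)}.ncard

end MixedGraph

/-- Vertices of the graph `G(φ)` built from a CNF formula `φ` with `n`
variables and `m` clauses: for each variable `x_i` the vertices `p_i`
(labelled `x_i`) and `n_i` (labelled `¬x_i`), and for each clause `c` the
vertices `s_c`, `t_c`. -/
inductive SatV (n m : ℕ) where
  | pos (i : Fin n) : SatV n m
  | neg (i : Fin n) : SatV n m
  | s (c : Fin m) : SatV n m
  | t (c : Fin m) : SatV n m
  deriving DecidableEq

/-- The vertex labelled with a literal (a variable together with its sign,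
`true` meaning unnegated). -/
def litV {n m : ℕ} : Fin n × Bool → SatV n m
  | (i, true) => SatV.pos i
  | (i, false) => SatV.neg i

/-- The vertex labelled with the negation of a literal. -/
def negLitV {n m : ℕ} : Fin n × Bool → SatV n m
  | (i, true) => SatV.neg i
  | (i, false) => SatV.pos i

/-- The undirected edges of `G(φ)`: `{p_i, n_i}` for each variable `x_i`. -/
def satE (n m : ℕ) : SimpleGraph (SatV n m) :=
  SimpleGraph.fromRel (fun a b => ∃ i : Fin n, a = SatV.pos i ∧ b = SatV.neg i)

/-- The arcs of `G(φ)`: for each clause `c` and each literal `l` occurring in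
`c`, an arc from `s_c` to the vertex labelled with the negation of `l`, and an
arc from the vertex labelled with `l` to `t_c`. -/
def satA (n m : ℕ) (lits : Fin m → Finset (Fin n × Bool)) :
    SatV n m → SatV n m → Prop := fun a b =>
  (∃ (c : Fin m) (l : Fin n × Bool), l ∈ lits c ∧ a = SatV.s c ∧ b = negLitV l) ∨
  (∃ (c : Fin m) (l : Fin n × Bool), l ∈ lits c ∧ a = litV l ∧ b = SatV.t c)

/-- The mixed graph `G(φ)`. -/
def satG (n m : ℕ) (lits : Fin m → Finset (Fin n × Bool)) :
    MixedGraph (SatV n m) where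
  E := satE n m
  A := satA n m lits
  A_irrefl := by
    rintro a (⟨c, ⟨i, b⟩, _, rfl, hh⟩ | ⟨c, ⟨i, b⟩, _, hh', hh⟩)
    · cases b <;> cases hh
    · subst hh; cases b <;> cases hh'

/-- The terminal pairs `T(φ)`: `(s_c, t_c)` for each clause `c`. -/
def satT (n m : ℕ) : Set (SatV n m × SatV n m) :=
  {p | ∃ c : Fin m, p = (SatV.s c, SatV.t c)}

/-! Orienting the edge `{p_i, n_i}` towards `p_i` or towards `n_i` is the same as making `x_i`
true or false, so the orientations of `G(φ)` are exactly the assignments. Under the orientation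
of `α`, the only routes from `s_c` to `t_c` are `s_c → ¬l → l → t_c` with `l ∈ c` true under `α`,
and `s_c → ¬l → t_c`, which needs both `l` and `¬l` in `c`. -/

namespace MixedGraph.Orientation

variable {V : Type*} {G : MixedGraph V}

theorem ext {lam mu : Orientation G} (h : lam.dir = mu.dir) : lam = mu := by
  cases lam; cases mu; cases h; rfl

end MixedGraph.Orientation

namespace SatV

variable {n m : ℕ}

theorem litV_injective : Function.Injective (litV : Fin n × Bool → SatV n m) := by
  rintro ⟨i, _ | _⟩ ⟨j, _ | _⟩ h <;> cases h <;> rfl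

theorem negLitV_injective : Function.Injective (negLitV : Fin n × Bool → SatV n m) := by
  rintro ⟨i, _ | _⟩ ⟨j, _ | _⟩ h <;> cases h <;> rfl

theorem negLitV_eq_litV (l : Fin n × Bool) : (negLitV l : SatV n m) = litV (l.1, !l.2) := by
  rcases l with ⟨i, _ | _⟩ <;> rfl

theorem litV_eq_negLitV (l : Fin n × Bool) : (litV l : SatV n m) = negLitV (l.1, !l.2) := by
  rcases l with ⟨i, _ | _⟩ <;> rfl

theorem negLitV_ne_t (l : Fin n × Bool) (c : Fin m) : negLitV l ≠ t c := by
  rcases l with ⟨i, _ | _⟩ <;> nofun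

theorem litV_ne_s (l : Fin n × Bool) (c : Fin m) : litV l ≠ s c := by
  rcases l with ⟨i, _ | _⟩ <;> nofun

theorem litV_ne_t (l : Fin n × Bool) (c : Fin m) : litV l ≠ t c := by
  rcases l with ⟨i, _ | _⟩ <;> nofun

end SatV

open SatV

variable {n m : ℕ}

theorem satE_adj_iff {u v : SatV n m} :
    (satE n m).Adj u v ↔ ∃ l : Fin n × Bool, u = negLitV l ∧ v = litV l := by
  constructor
  · rintro ⟨-, ⟨i, rfl, rfl⟩ | ⟨i, rfl, rfl⟩⟩
    exacts [⟨(i, false), rfl, rfl⟩, ⟨(i, true), rfl, rfl⟩]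
  · rintro ⟨⟨i, _ | _⟩, rfl, rfl⟩
    exacts [⟨nofun, Or.inl ⟨i, rfl, rfl⟩⟩, ⟨nofun, Or.inr ⟨i, rfl, rfl⟩⟩]

theorem satE_edgeSet_ncard : (satE n m).edgeSet.ncard = n := by
  have hrange : (satE n m).edgeSet = Set.range fun i : Fin n => s(pos i, neg i) := by
    ext e
    induction e using Sym2.ind with
    | _ u v =>
      simp only [SimpleGraph.mem_edgeSet, satE, SimpleGraph.fromRel_adj, Set.mem_range,
        Sym2.eq_iff]
      constructor
      · rintro ⟨-, ⟨i, rfl, rfl⟩ | ⟨i, rfl, rfl⟩⟩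
        exacts [⟨i, Or.inl ⟨rfl, rfl⟩⟩, ⟨i, Or.inr ⟨rfl, rfl⟩⟩]
      · rintro ⟨i, ⟨rfl, rfl⟩ | ⟨rfl, rfl⟩⟩
        exacts [⟨nofun, Or.inl ⟨i, rfl, rfl⟩⟩, ⟨nofun, Or.inr ⟨i, rfl, rfl⟩⟩]
  have hinj : Function.Injective fun i : Fin n => (s(pos i, neg i) : Sym2 (SatV n m)) := by
    intro i j hij
    simpa using hij
  rw [hrange, Set.ncard_range_of_injective hinj, Nat.card_eq_fintype_card, Fintype.card_fin]

def satOrientation (lits : Fin m → Finset (Fin n × Bool)) (α : Fin n → Bool) :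
    (satG n m lits).Orientation where
  dir u v := ∃ l : Fin n × Bool, α l.1 = l.2 ∧ u = negLitV l ∧ v = litV l
  dir_adj := by
    rintro u v ⟨l, -, rfl, rfl⟩
    exact satE_adj_iff.2 ⟨l, rfl, rfl⟩
  total := by
    intro u v huv
    obtain ⟨l, rfl, rfl⟩ := satE_adj_iff.1 huv
    by_cases hl : α l.1 = l.2
    · exact Or.inl ⟨l, hl, rfl, rfl⟩
    · exact Or.inr ⟨(l.1, !l.2), Bool.eq_not.2 hl, litV_eq_negLitV l, negLitV_eq_litV l⟩
  antisymm := by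
    rintro u v ⟨l, hl, rfl, rfl⟩ ⟨l', hl', -, hv⟩
    rw [negLitV_eq_litV] at hv
    cases litV_injective hv
    simp [hl] at hl'

variable {lits : Fin m → Finset (Fin n × Bool)}

theorem exists_eq_satOrientation (lam : (satG n m lits).Orientation) :
    ∃ α : Fin n → Bool, lam = satOrientation lits α := by
  classical
  refine ⟨fun i => decide (lam.dir (neg i) (pos i)), MixedGraph.Orientation.ext ?_⟩
  ext u v
  constructor
  · intro huv
    obtain ⟨⟨i, b⟩, rfl, rfl⟩ := satE_adj_iff.1 (lam.dir_adj u v huv)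
    cases b
    · exact ⟨(i, false), by simpa [litV, negLitV] using lam.antisymm _ _ huv, rfl, rfl⟩
    · exact ⟨(i, true), by simpa [litV, negLitV] using huv, rfl, rfl⟩
  · rintro ⟨⟨i, _ | _⟩, hl, rfl, rfl⟩
    · have hadj : (satE n m).Adj (pos i) (neg i) := satE_adj_iff.2 ⟨(i, false), rfl, rfl⟩
      simpa [litV, negLitV] using (lam.total _ _ hadj).resolve_right (by simpa using hl)
    · simpa [litV, negLitV] using hl

section Reachability

variable {α : Fin n → Bool} {c : Fin m} {l : Fin n × Bool} {v : SatV n m}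

theorem satOrientation_arc_s (h : (satOrientation lits α).arc (s c) v) :
    ∃ l ∈ lits c, v = negLitV l := by
  rcases h with (⟨c', l, hl, hc, rfl⟩ | ⟨_, l, _, hs, _⟩) | ⟨l, _, hs, _⟩
  · cases hc
    exact ⟨l, hl, rfl⟩
  · exact absurd hs.symm (litV_ne_s l c)
  · rw [negLitV_eq_litV] at hs
    exact absurd hs.symm (litV_ne_s _ c)

theorem not_satOrientation_arc_t : ¬ (satOrientation lits α).arc (t c) v := by
  rintro ((⟨_, _, _, hc, _⟩ | ⟨_, l, _, ht, _⟩) | ⟨l, _, ht, _⟩)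
  · cases hc
  · exact litV_ne_t l c ht.symm
  · exact negLitV_ne_t l c ht.symm

theorem satOrientation_arc_negLitV (h : (satOrientation lits α).arc (negLitV l) v) :
    (α l.1 = l.2 ∧ v = litV l) ∨ ∃ d, (l.1, !l.2) ∈ lits d ∧ v = t d := by
  rcases h with (⟨_, l', _, hs, _⟩ | ⟨d, l', hl', hl, rfl⟩) | ⟨l', hl', hl, rfl⟩
  · rw [negLitV_eq_litV] at hs
    exact absurd hs (litV_ne_s _ _)
  · rw [negLitV_eq_litV] at hl
    cases litV_injective hl
    exact Or.inr ⟨d, hl', rfl⟩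
  · cases negLitV_injective hl
    exact Or.inl ⟨hl', rfl⟩

theorem satOrientation_reach_t_iff {d : Fin m} :
    Relation.ReflTransGen (satOrientation lits α).arc (t d) (t c) ↔ d = c := by
  refine ⟨fun h => ?_, by rintro rfl; rfl⟩
  rcases h.cases_head with h | ⟨_, h, -⟩
  · exact t.inj h
  · exact absurd h not_satOrientation_arc_t

theorem satOrientation_reach_iff :
    Relation.ReflTransGen (satOrientation lits α).arc (s c) (t c) ↔
      ∃ l ∈ lits c, α l.1 = l.2 := by
  constructor
  · intro h
    obtain h | ⟨_, hs, hpath⟩ := h.cases_head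
    · cases h
    obtain ⟨l, hl, rfl⟩ := satOrientation_arc_s hs
    obtain h | ⟨_, hneg, hpath⟩ := hpath.cases_head
    · exact absurd h (negLitV_ne_t l c)
    obtain ⟨hα, -⟩ | ⟨d, hd, rfl⟩ := satOrientation_arc_negLitV hneg
    · exact ⟨l, hl, hα⟩
    cases satOrientation_reach_t_iff.1 hpath
    by_cases hα : α l.1 = l.2
    · exact ⟨l, hl, hα⟩
    · exact ⟨(l.1, !l.2), hd, Bool.eq_not.2 hα⟩
  · rintro ⟨l, hl, hα⟩
    have h₁ : (satOrientation lits α).arc (s c) (negLitV l) := Or.inl (Or.inl ⟨c, l, hl, rfl, rfl⟩)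
    have h₂ : (satOrientation lits α).arc (negLitV l) (litV l) := Or.inr ⟨l, hα, rfl, rfl⟩
    have h₃ : (satOrientation lits α).arc (litV l) (t c) := Or.inl (Or.inr ⟨c, l, hl, rfl, rfl⟩)
    exact .head h₁ (.head h₂ (.single h₃))

theorem satOrientation_satisfies_iff :
    (satOrientation lits α).Satisfies (satT n m) ↔ ∀ c, ∃ l ∈ lits c, α l.1 = l.2 := by
  refine ⟨fun h c => satOrientation_reach_iff.1 (h _ ⟨c, rfl⟩), ?_⟩
  rintro h _ ⟨c, rfl⟩
  exact satOrientation_reach_iff.2 (h c)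

end Reachability

theorem steinerOrientation_stmt10_general (n m : ℕ)
    (lits : Fin m → Finset (Fin n × Bool)) :
    ((∃ α : Fin n → Bool, ∀ c, ∃ l ∈ lits c, α l.1 = l.2) ↔
      (satG n m lits).YesInstance (satT n m)) ∧
    (satE n m).edgeSet.ncard = n := by
  refine ⟨⟨fun ⟨α, hα⟩ => ⟨satOrientation lits α, satOrientation_satisfies_iff.2 hα⟩, ?_⟩,
    satE_edgeSet_ncard⟩
  rintro ⟨lam, hlam⟩
  obtain ⟨α, rfl⟩ := exists_eq_satOrientation lam
  exact ⟨α, satOrientation_satisfies_iff.1 hlam⟩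

/-- a CNF formula `φ` (clause `c` consists of the nonempty set
`lits c` of literals) is satisfiable iff `(G(φ), T(φ))` is a yes-instance of
Steiner Orientation; moreover `G(φ)` has exactly `n` undirected edges. -/
theorem steinerOrientation_stmt10 (n m : ℕ)
    (lits : Fin m → Finset (Fin n × Bool))
    (hlits : ∀ c, (lits c).Nonempty) :
    ((∃ α : Fin n → Bool, ∀ c, ∃ l ∈ lits c, α l.1 = l.2) ↔
      (satG n m lits).YesInstance (satT n m)) ∧
    (satE n m).edgeSet.ncard = n :=
  steinerOrientation_stmt10_general n m lits
end

section
/- Let G = (V, E, A) be a mixed graph such that the simple graph (V, E) is a forest and every vertex v with deg_E(v) = 1 satisfies deg_A(v) ≥ 1. Let V_1 = {v ∈ V : deg_E(v) = 1 and deg_A(v) ≥ 2}, V_2 = {v ∈ V : deg_E(v) = 2 and deg_A(v) ≥ 1}, and V_3 = {v ∈ V : deg_E(v) ≥ 3}. Then |V_1| + 2·|V_2| + Σ_{v ∈ V_3} deg_E(v) ≤ 6·|A|. -/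
/-! In a forest, `Σ (deg v - 2)` over the non-isolated vertices is at most `0`, since the forest
induced on them has fewer edges than vertices. As `d ≤ 3 (d - 2)` for `d ≥ 3`, the degrees at least
`3` sum to at most three times the number of leaves. Each leaf carries an arc, and counting every
arc at both ends pays `3` per leaf and the contributions of `V₁` and `V₂` vertex by vertex. -/

namespace SimpleGraph

open Finset

variable {V : Type*} [Fintype V] {G : SimpleGraph V}

lemma IsAcyclic.card_edgeFinset_lt [Nonempty V] [Fintype G.edgeSet] (hG : G.IsAcyclic) :
    #G.edgeFinset < Fintype.card V := by
  obtain ⟨T, hGT, -, hT⟩ := connected_top.exists_isTree_le_of_le_of_isAcyclic le_top hG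
  classical
  calc #G.edgeFinset ≤ #T.edgeFinset := card_le_card (edgeFinset_mono hGT)
    _ < Fintype.card V := by rw [← hT.card_edgeFinset]; omega

lemma IsAcyclic.sum_degrees_le [DecidableRel G.Adj] (hG : G.IsAcyclic) :
    ∑ v, G.degree v ≤ 2 * #{v | G.degree v ≠ 0} := by
  classical
  set S : Finset V := {v | G.degree v ≠ 0}
  have hS : ∀ v, v ∈ S ↔ v ∈ G.support := by
    simp [S, mem_support, ← card_neighborFinset_eq_degree, card_eq_zero,
      eq_empty_iff_forall_notMem]
  have hsum : ∑ v, G.degree v = ∑ v : G.support, (G.induce G.support).degree v := by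
    simp only [degree_induce_support]
    rw [← sum_filter_ne_zero]
    exact sum_subtype S hS _
  rw [hsum, sum_degrees_eq_twice_card_edges, ← Fintype.card_of_subtype S hS]
  cases isEmpty_or_nonempty G.support
  · simp [edgeFinset_eq_empty, Subsingleton.elim _ (⊥ : SimpleGraph G.support)]
  · exact Nat.mul_le_mul_left 2 (hG.induce _).card_edgeFinset_lt.le

lemma IsAcyclic.sum_large_degrees_le [DecidableRel G.Adj] (hG : G.IsAcyclic) :
    ∑ v, (if 3 ≤ G.degree v then G.degree v else 0) ≤ 3 * #{v | G.degree v = 1} := by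
  have hpoint : ∀ d : ℕ, (if 3 ≤ d then d else 0) + 6 * (if d ≠ 0 then 1 else 0)
      ≤ 3 * (if d = 1 then 1 else 0) + 3 * d := by
    intro d
    split_ifs <;> omega
  have hsum := sum_le_sum fun v (_ : v ∈ univ) ↦ hpoint (G.degree v)
  simp only [sum_add_distrib, ← mul_sum, ← card_filter] at hsum
  have := hG.sum_degrees_le
  omega

end SimpleGraph

namespace MixedGraph

open Finset

variable {V : Type*} [Fintype V]

lemma sum_degA (G : MixedGraph V) : ∑ v, G.degA v = 2 * {p : V × V | G.A p.1 p.2}.ncard := by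
  classical
  set arcs : Finset (V × V) := {p | G.A p.1 p.2}
  have hdegA (v : V) :
      G.degA v = ∑ p ∈ arcs, ((if p.1 = v then 1 else 0) + if p.2 = v then 1 else 0) := by
    rw [degA, Set.ncard_eq_toFinset_card', Set.toFinset_ofPred, ← filter_filter, card_filter]
    refine sum_congr rfl fun p hp ↦ ?_
    have hne : p.1 ≠ p.2 := fun h ↦ G.A_irrefl p.2 (h ▸ (mem_filter.1 hp).2)
    by_cases h1 : p.1 = v <;> by_cases h2 : p.2 = v <;> simp_all
  calc ∑ v, G.degA v = ∑ p ∈ arcs, 2 := by simp only [hdegA]; rw [sum_comm]; simp [sum_add_distrib]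
    _ = 2 * {p : V × V | G.A p.1 p.2}.ncard := by
      rw [sum_const, smul_eq_mul, mul_comm, Set.ncard_eq_toFinset_card', Set.toFinset_ofPred]

end MixedGraph

theorem steinerOrientation_stmt12_general {V : Type*} [Fintype V]
    (G : MixedGraph V) [DecidableRel G.E.Adj]
    (hforest : G.E.IsAcyclic)
    (hleaf : ∀ v : V, G.E.degree v = 1 → 1 ≤ G.degA v) :
    {v : V | G.E.degree v = 1 ∧ 2 ≤ G.degA v}.ncard
      + 2 * {v : V | G.E.degree v = 2 ∧ 1 ≤ G.degA v}.ncard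
      + ∑ v : V, (if 3 ≤ G.E.degree v then G.E.degree v else 0)
    ≤ 6 * {p : V × V | G.A p.1 p.2}.ncard := by
  classical
  have hpoint (v : V) :
      (if G.E.degree v = 1 ∧ 2 ≤ G.degA v then 1 else 0)
        + 2 * (if G.E.degree v = 2 ∧ 1 ≤ G.degA v then 1 else 0)
        + 3 * (if G.E.degree v = 1 then 1 else 0) ≤ 3 * G.degA v := by
    have := hleaf v
    split_ifs <;> omega
  have hsum := Finset.sum_le_sum fun v (_ : v ∈ Finset.univ) ↦ hpoint v
  simp only [Finset.sum_add_distrib, ← Finset.mul_sum, ← Finset.card_filter, G.sum_degA] at hsum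
  have hlarge := hforest.sum_large_degrees_le
  simp only [Set.ncard_eq_toFinset_card', Set.toFinset_ofPred] at hsum ⊢
  omega

/-- Let `G = (V, E, A)` be a mixed graph with `(V, E)` a forest
such that every vertex with `deg_E(v) = 1` satisfies `deg_A(v) ≥ 1`. With
`V₁ = {v : deg_E(v) = 1, deg_A(v) ≥ 2}`, `V₂ = {v : deg_E(v) = 2, deg_A(v) ≥ 1}`
and `V₃ = {v : deg_E(v) ≥ 3}`, we have
`|V₁| + 2|V₂| + Σ_{v ∈ V₃} deg_E(v) ≤ 6|A|`. -/
theorem steinerOrientation_stmt12 {V : Type*} [Fintype V] [DecidableEq V]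
    (G : MixedGraph V) [DecidableRel G.E.Adj]
    (hforest : G.E.IsAcyclic)
    (hleaf : ∀ v : V, G.E.degree v = 1 → 1 ≤ G.degA v) :
    {v : V | G.E.degree v = 1 ∧ 2 ≤ G.degA v}.ncard
      + 2 * {v : V | G.E.degree v = 2 ∧ 1 ≤ G.degA v}.ncard
      + ∑ v : V, (if 3 ≤ G.E.degree v then G.E.degree v else 0)
    ≤ 6 * {p : V × V | G.A p.1 p.2}.ncard :=
  steinerOrientation_stmt12_general G hforest hleaf
end

section
/- Let (G, T) be a Steiner Orientation instance with G = (V, E, A) mixed acyclic. Let P be a connected component of the simple graph (V, E) that is a path with endpoints a and b, and suppose that exactly two arcs of A are incident to vertices of V(P): one arc whose head is a and whose tail lies outside V(P), and one arc whose tail is b and whose head lies outside V(P). Assume furthermore that no pair of T has both of its terminals in V(P). If some orientation λ of E satisfies every pair of T (that is, G_λ contains a directed path from s to t for every (s,t) ∈ T), then the orientation λ' that agrees with λ on all edges of E not on P and orients the edges of P so that P becomes a directed path from a to b also satisfies every pair of T. -/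
open Relation

namespace List

variable {α : Type*} {R : α → α → Prop} {l : List α}

theorem reflTransGen_of_head?_eq_of_mem (hR : ∀ x y, [x, y] <:+: l → R x y) {a x : α}
    (ha : l.head? = some a) (hx : x ∈ l) : ReflTransGen R a x := by
  induction l generalizing a with
  | nil => simp at ha
  | cons z rest ih =>
    obtain rfl : z = a := by simpa using ha
    rcases mem_cons.mp hx with rfl | hx
    · exact .refl
    cases rest with
    | nil => simp at hx
    | cons y rest =>
      exact .head (hR z y ⟨[], rest, rfl⟩)
        (ih (fun u v h => hR u v (h.trans (infix_cons (infix_refl _)))) rfl hx)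

theorem reflTransGen_of_mem_of_getLast?_eq (hR : ∀ x y, [x, y] <:+: l → R x y) {b x : α}
    (hb : l.getLast? = some b) (hx : x ∈ l) : ReflTransGen R x b := by
  have hR' : ∀ x y, [x, y] <:+: l.reverse → Function.swap R x y :=
    fun x y h => hR y x (reverse_infix.mp (by simpa using h))
  exact reflTransGen_swap.mp
    (reflTransGen_of_head?_eq_of_mem hR' (by rwa [head?_reverse]) (mem_reverse.mpr hx))

end List

namespace Relation.ReflTransGen

variable {α : Type*} {R R' : α → α → Prop} {C : Set α} {a' b' : α}

/-- The last two conjuncts are the induction invariant: a walk that ends in `C` entered it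
from `a'`, and one that starts in `C` left it towards `b'`. -/
theorem reroute_around {x y : α} (h : ReflTransGen R x y)
    (hout : ∀ ⦃u v⦄, R u v → u ∉ C → v ∉ C → R' u v)
    (henter : ∀ ⦃u v⦄, R u v → u ∉ C → v ∈ C → u = a')
    (hleave : ∀ ⦃u v⦄, R u v → u ∈ C → v ∉ C → v = b')
    (hthrough : ReflTransGen R' a' b') :
    (x ∉ C → y ∉ C → ReflTransGen R' x y) ∧ (x ∉ C → y ∈ C → ReflTransGen R' x a') ∧
      (x ∈ C → y ∉ C → ReflTransGen R' b' y) := by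
  induction h with
  | refl => exact ⟨fun _ _ => .refl, fun hx hy => absurd hy hx, fun hx hy => absurd hx hy⟩
  | @tail v w _ hvw ih =>
    obtain ⟨ih_out, ih_enter, ih_leave⟩ := ih
    by_cases hv : v ∈ C
    · refine ⟨fun hx hw => ?_, fun hx _ => ih_enter hx hv, fun _ hw => ?_⟩
      · rw [hleave hvw hv hw]
        exact (ih_enter hx hv).trans hthrough
      · rw [hleave hvw hv hw]
    · refine ⟨fun hx hw => (ih_out hx hv).tail (hout hvw hv hw), fun hx hw => ?_,
        fun hx hw => (ih_leave hx hv).tail (hout hvw hv hw)⟩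
      rw [← henter hvw hv hw]
      exact ih_out hx hv

end Relation.ReflTransGen

namespace MixedGraph

variable {V : Type*} {G : MixedGraph V} {c : G.E.ConnectedComponent} {a a' b b' : V}

theorem Orientation.mem_supp_iff_of_dir (lam : G.Orientation) {u v : V} (h : lam.dir u v) :
    u ∈ c.supp ↔ v ∈ c.supp :=
  c.mem_supp_congr_adj (lam.dir_adj u v h)

theorem Orientation.arc_of_arc_of_not_mem_supp {lam lam' : G.Orientation}
    (hoff : ∀ u v : V, G.E.Adj u v → u ∉ c.supp → (lam'.dir u v ↔ lam.dir u v))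
    ⦃u v : V⦄ (h : lam.arc u v) (hu : u ∉ c.supp) : lam'.arc u v :=
  h.imp_right fun h => (hoff u v (lam.dir_adj u v h) hu).mpr h

theorem Orientation.eq_of_arc_into_supp
    (honly : ∀ u v : V, G.A u v → (u ∈ c.supp ∨ v ∈ c.supp) →
      (u, v) = (a', a) ∨ (u, v) = (b, b'))
    (hb' : b' ∉ c.supp) (lam : G.Orientation) ⦃u v : V⦄ (h : lam.arc u v)
    (hu : u ∉ c.supp) (hv : v ∈ c.supp) : u = a' := by
  rcases h with h | h
  · rcases honly u v h (.inr hv) with h | h <;> simp only [Prod.mk.injEq] at h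
    · exact h.1
    · exact absurd (h.2 ▸ hv) hb'
  · exact absurd ((lam.mem_supp_iff_of_dir h).mpr hv) hu

theorem Orientation.eq_of_arc_out_of_supp
    (honly : ∀ u v : V, G.A u v → (u ∈ c.supp ∨ v ∈ c.supp) →
      (u, v) = (a', a) ∨ (u, v) = (b, b'))
    (ha' : a' ∉ c.supp) (lam : G.Orientation) ⦃u v : V⦄ (h : lam.arc u v)
    (hu : u ∈ c.supp) (hv : v ∉ c.supp) : v = b' := by
  rcases h with h | h
  · rcases honly u v h (.inl hu) with h | h <;> simp only [Prod.mk.injEq] at h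
    · exact absurd (h.1 ▸ hu) ha'
    · exact h.2
  · exact absurd ((lam.mem_supp_iff_of_dir h).mp hu) hv

end MixedGraph

theorem steinerOrientation_stmt17_general {V : Type*}
    (G : MixedGraph V)
    (T : Set (V × V))
    (c : G.E.ConnectedComponent) (l : List V) (a b : V)
    (hsupp : {x | x ∈ l} = c.supp)
    (ha : l.head? = some a) (hb : l.getLast? = some b)
    (a' b' : V) (ha' : a' ∉ c.supp) (hb' : b' ∉ c.supp)
    (haa : G.A a' a) (hbb : G.A b b')
    (honly : ∀ u v : V, G.A u v → (u ∈ c.supp ∨ v ∈ c.supp) →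
      (u, v) = (a', a) ∨ (u, v) = (b, b'))
    (hTout : ∀ p ∈ T, ¬ (p.1 ∈ c.supp ∧ p.2 ∈ c.supp))
    (lam : G.Orientation) (hlam : lam.Satisfies T)
    (lam' : G.Orientation)
    (hoff : ∀ u v : V, G.E.Adj u v → u ∉ c.supp →
      (lam'.dir u v ↔ lam.dir u v))
    (hon : ∀ x y : V, [x, y] <:+: l → lam'.dir x y) :
    lam'.Satisfies T := by
  rintro ⟨s, t⟩ hp
  have mem_l : ∀ x ∈ c.supp, x ∈ l := fun x hx => (Set.ext_iff.mp hsupp x).mpr hx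
  have hpath : ∀ x y, [x, y] <:+: l → lam'.arc x y := fun x y h => .inr (hon x y h)
  have from_a : ∀ x ∈ l, ReflTransGen lam'.arc a x :=
    fun _ => List.reflTransGen_of_head?_eq_of_mem hpath ha
  have to_b : ∀ x ∈ l, ReflTransGen lam'.arc x b :=
    fun _ => List.reflTransGen_of_mem_of_getLast?_eq hpath hb
  have hthrough : ReflTransGen lam'.arc a' b' :=
    .head (.inl haa) ((from_a b (List.mem_of_getLast? hb)).tail (.inl hbb))
  obtain ⟨h_out, h_enter, h_leave⟩ := (hlam _ hp).reroute_around
    (fun _ _ h hu _ => lam.arc_of_arc_of_not_mem_supp hoff h hu)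
    (lam.eq_of_arc_into_supp honly hb') (lam.eq_of_arc_out_of_supp honly ha') hthrough
  by_cases hs : s ∈ c.supp <;> by_cases ht : t ∈ c.supp
  · exact absurd ⟨hs, ht⟩ (hTout _ hp)
  · exact ((to_b s (mem_l s hs)).tail (.inl hbb)).trans (h_leave hs ht)
  · exact ((h_enter hs ht).tail (.inl haa)).trans (from_a t (mem_l t ht))
  · exact h_out hs ht

/-- Let `(G, T)` be a Steiner Orientation instance with `G` mixed
acyclic. Let a connected component of `(V, E)` be a path, given by the list `l`
of its vertices (without repetition, adjacency in `E` being exactly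
consecutiveness in `l`), with endpoints `a` (head) and `b` (last). Suppose
exactly two arcs of `A` are incident to this component: one arc `(a', a)` with
tail `a'` outside the component and head `a`, and one arc `(b, b')` with tail
`b` and head `b'` outside the component. Assume no pair of `T` has both of its
terminals in the component. If an orientation `lam` satisfies every pair of
`T`, then any orientation `lam'` agreeing with `lam` on all edges not on the
path and orienting the path edges from `a` towards `b` also satisfies every
pair of `T`. -/
theorem steinerOrientation_stmt17 {V : Type*} [Fintype V]
    (G : MixedGraph V) (hG : G.MixedAcyclic)
    (T : Set (V × V)) (hT : ∀ p ∈ T, p.1 ≠ p.2)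
    (c : G.E.ConnectedComponent) (l : List V) (a b : V)
    (hnd : l.Nodup)
    (hsupp : {x | x ∈ l} = c.supp)
    (hadj : ∀ x y : V, x ∈ l → y ∈ l →
      (G.E.Adj x y ↔ ([x, y] <:+: l ∨ [y, x] <:+: l)))
    (ha : l.head? = some a) (hb : l.getLast? = some b)
    (a' b' : V) (ha' : a' ∉ c.supp) (hb' : b' ∉ c.supp)
    (haa : G.A a' a) (hbb : G.A b b')
    (honly : ∀ u v : V, G.A u v → (u ∈ c.supp ∨ v ∈ c.supp) →
      (u, v) = (a', a) ∨ (u, v) = (b, b'))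
    (hTout : ∀ p ∈ T, ¬ (p.1 ∈ c.supp ∧ p.2 ∈ c.supp))
    (lam : G.Orientation) (hlam : lam.Satisfies T)
    (lam' : G.Orientation)
    (hoff : ∀ u v : V, G.E.Adj u v → u ∉ c.supp →
      (lam'.dir u v ↔ lam.dir u v))
    (hon : ∀ x y : V, [x, y] <:+: l → lam'.dir x y) :
    lam'.Satisfies T :=
  steinerOrientation_stmt17_general G T c l a b hsupp ha hb a' b' ha' hb' haa hbb honly hTout lam
    hlam lam' hoff hon
end
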